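/- arXiv:2401.04455 — 2 statements merged into one kernel-verified Lean document; each statement's English description precedes it below -/
import Mathlib

section
/- If P_X has no atoms and there exists a Borel set A⊂ℝ with Leb(A)=0 and P_X(A)>0, then P_X is singular with respect to Lebesgue measure: there is a Borel set B⊇A with Leb(B)=0 and P_X(B)=1. -/
/-!
The maps `φ_ω` generate a countable group `G` of affine bijections of `ℝ`, and affine bijections
preserve Lebesgue-null sets, so the `G`-saturation `B` of `A` is a Lebesgue-null Borel set
containing `A`. Since `X ω = φ_ω (X (T ω))`, the event `{X ∈ B}` is `T`-invariant modulo `P`;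
by ergodicity its probability is `0` or `1`, and it is at least `P_X(A) > 0`.
-/

open MeasureTheory Filter

theorem Subgroup.countable_closure {G : Type*} [Group G] {s : Set G} (hs : s.Countable) :
    (Subgroup.closure s : Set G).Countable := by
  have := hs.to_subtype
  rw [FreeGroup.closure_eq_range, MonoidHom.coe_range]
  exact Set.countable_range _

theorem HasSum.eq_add_mul_of_iterate {Ω : Type*} {T : Ω → Ω} {b r : Ω → ℝ} {ω : Ω} {x y : ℝ}
    (hx : HasSum (fun n : ℕ => (∏ k ∈ Finset.range n, r (T^[k] ω)) * b (T^[n] ω)) x)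
    (hy : HasSum (fun n : ℕ => (∏ k ∈ Finset.range n, r (T^[k] (T ω))) * b (T^[n] (T ω))) y) :
    x = b ω + r ω * y := by
  have hshift : (fun n : ℕ => (∏ k ∈ Finset.range (n + 1), r (T^[k] ω)) * b (T^[n + 1] ω)) =
      fun n => r ω * ((∏ k ∈ Finset.range n, r (T^[k] (T ω))) * b (T^[n] (T ω))) := by
    funext n
    rw [Finset.prod_range_succ']
    simp only [Function.iterate_succ_apply, Function.iterate_zero_apply]
    ring
  have htail := hy.mul_left (r ω)
  rw [← hshift] at htail
  simpa using hx.unique htail.zero_add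

theorem QuasiErgodic.measure_eq_one_of_ae_invariant {α : Type*} [MeasurableSpace α]
    {μ : Measure α} [IsProbabilityMeasure μ] {f : α → α} {s : Set α} (hf : QuasiErgodic f μ)
    (hs : NullMeasurableSet s μ) (hinv : f ⁻¹' s =ᵐ[μ] s) (hpos : 0 < μ s) : μ s = 1 := by
  rcases hf.ae_empty_or_univ₀ hs hinv with h | h
  · simp [measure_congr h] at hpos
  · simpa using measure_congr h

namespace MeasureTheory

def quasiMeasurePreservingPerms {α : Type*} [MeasurableSpace α] (μ : Measure α) :
    Subgroup (Equiv.Perm α) where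
  carrier := {g | Measure.QuasiMeasurePreserving g μ μ ∧ Measure.QuasiMeasurePreserving ⇑g⁻¹ μ μ}
  mul_mem' := by
    rintro g h ⟨hg, hg'⟩ ⟨hh, hh'⟩
    refine ⟨hg.comp hh, ?_⟩
    rw [mul_inv_rev, Equiv.Perm.coe_mul]
    exact hh'.comp hg'
  one_mem' := ⟨Measure.QuasiMeasurePreserving.id μ, Measure.QuasiMeasurePreserving.id μ⟩
  inv_mem' := fun ⟨hg, hg'⟩ => ⟨hg', by rwa [inv_inv]⟩

theorem quasiMeasurePreserving_const_add_mul (c : ℝ) {s : ℝ} (hs : s ≠ 0) :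
    Measure.QuasiMeasurePreserving (fun y => c + s * y) volume volume :=
  (measurePreserving_add_left volume c).quasiMeasurePreserving.comp
    (Measure.quasiMeasurePreserving_smul volume hs)

theorem mem_quasiMeasurePreservingPerms_volume_of_coe_eq_affine {g : Equiv.Perm ℝ} {c s : ℝ}
    (hs : s ≠ 0) (hg : ⇑g = fun y => c + s * y) : g ∈ quasiMeasurePreservingPerms volume := by
  have hg_inv : ⇑g⁻¹ = fun y => -(c / s) + s⁻¹ * y := by
    funext y
    apply g.injective
    rw [← Equiv.Perm.mul_apply, mul_inv_cancel, Equiv.Perm.one_apply, hg]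
    field_simp
    ring
  exact ⟨hg ▸ quasiMeasurePreserving_const_add_mul c hs,
    hg_inv ▸ quasiMeasurePreserving_const_add_mul _ (inv_ne_zero hs)⟩

end MeasureTheory

namespace Subgroup

variable {α : Type*} (G : Subgroup (Equiv.Perm α)) (A : Set α)

def saturation : Set α := ⋃ g ∈ G, g ⁻¹' A

theorem subset_saturation : A ⊆ G.saturation A := fun _ hx => Set.mem_biUnion G.one_mem hx

theorem preimage_saturation {g : Equiv.Perm α} (hg : g ∈ G) :
    g ⁻¹' G.saturation A = G.saturation A := by
  ext x
  simp only [saturation, Set.mem_preimage, Set.mem_iUnion, exists_prop]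
  constructor
  · rintro ⟨h, hh, hx⟩
    exact ⟨h * g, G.mul_mem hh hg, hx⟩
  · rintro ⟨h, hh, hx⟩
    exact ⟨h * g⁻¹, G.mul_mem hh (G.inv_mem hg), by simpa using hx⟩

variable {G A}

theorem preimage_saturation_ae_eq {Ω : Type*} [MeasurableSpace Ω] {P : Measure Ω} {T : Ω → Ω}
    {X : Ω → α} (hX : ∀ᵐ ω ∂P, ∃ g ∈ G, g (X (T ω)) = X ω) :
    T ⁻¹' (X ⁻¹' G.saturation A) =ᵐ[P] X ⁻¹' G.saturation A := by
  rw [eventuallyEq_set]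
  filter_upwards [hX] with ω ⟨g, hg, hω⟩
  change X (T ω) ∈ G.saturation A ↔ X ω ∈ G.saturation A
  rw [← hω, ← Set.mem_preimage (f := g), G.preimage_saturation A hg]

variable [MeasurableSpace α]

theorem measurableSet_saturation (hG : (G : Set (Equiv.Perm α)).Countable)
    (hG_meas : ∀ g ∈ G, Measurable g) (hA : MeasurableSet A) :
    MeasurableSet (G.saturation A) :=
  .biUnion hG fun g hg => hG_meas g hg hA

theorem measure_saturation_eq_zero {μ : Measure α} (hG : (G : Set (Equiv.Perm α)).Countable)
    (hG_qmp : ∀ g ∈ G, Measure.QuasiMeasurePreserving g μ μ) (hA : μ A = 0) :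
    μ (G.saturation A) = 0 :=
  (measure_biUnion_null_iff hG).2 fun g hg => (hG_qmp g hg).preimage_null hA

end Subgroup

theorem continuous_charging_null_set_implies_singular_general
    {Ω : Type*} [MeasurableSpace Ω] (P : Measure Ω) [IsProbabilityMeasure P]
    (T : Ω → Ω) (hT : Ergodic T P)
    (b r : Ω → ℝ)
    (hrpos : ∀ ω, 0 < r ω)
    (hScount : Set.Countable {p : ℝ × ℝ | ∃ ω, (b ω, r ω) = p})
    (X : Ω → ℝ) (hX : Measurable X)
    (hXsum : ∀ᵐ ω ∂P,
      HasSum (fun n : ℕ => (∏ k ∈ Finset.range n, r (T^[k] ω)) * b (T^[n] ω)) (X ω))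
    (A : Set ℝ) (hA : MeasurableSet A) (hAnull : volume A = 0) (hApos : 0 < P.map X A) :
    (∃ B : Set ℝ, MeasurableSet B ∧ A ⊆ B ∧ volume B = 0 ∧ P.map X B = 1)
    ∧ P.map X ⟂ₘ volume := by
  set G := Subgroup.closure {g : Equiv.Perm ℝ | ⇑g ∈ Set.range fun ω y => b ω + r ω * y}
  have hG_count : (G : Set (Equiv.Perm ℝ)).Countable := by
    refine Subgroup.countable_closure (Set.Countable.preimage ?_ DFunLike.coe_injective)
    exact Set.range_comp (fun p y => p.1 + p.2 * y) (fun ω => (b ω, r ω)) ▸ hScount.image _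
  have hG_le : G ≤ quasiMeasurePreservingPerms volume := by
    rw [Subgroup.closure_le]
    rintro _ ⟨ω, hω⟩
    exact mem_quasiMeasurePreservingPerms_volume_of_coe_eq_affine (hrpos ω).ne' hω.symm
  have hG_qmp : ∀ g ∈ G, Measure.QuasiMeasurePreserving g volume volume :=
    fun g hg => (hG_le hg).1
  have hstep : ∀ᵐ ω ∂P, ∃ g ∈ G, g (X (T ω)) = X ω := by
    filter_upwards [hXsum, hT.quasiMeasurePreserving.ae hXsum] with ω hω hTω
    exact ⟨Equiv.addLeft (b ω) * Equiv.mulLeft₀ (r ω) (hrpos ω).ne',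
      Subgroup.subset_closure ⟨ω, rfl⟩, (hω.eq_add_mul_of_iterate hTω).symm⟩
  set B := G.saturation A
  have hB : MeasurableSet B :=
    Subgroup.measurableSet_saturation hG_count (fun g hg => (hG_qmp g hg).measurable) hA
  have hB_null : volume B = 0 := Subgroup.measure_saturation_eq_zero hG_count hG_qmp hAnull
  have hPB : P.map X B = 1 := by
    rw [Measure.map_apply hX hB]
    refine hT.quasiErgodic.measure_eq_one_of_ae_invariant (hX hB).nullMeasurableSet
      (Subgroup.preimage_saturation_ae_eq hstep) ?_
    rw [← Measure.map_apply hX hB]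
    exact hApos.trans_le (measure_mono (G.subset_saturation A))
  have := Measure.isProbabilityMeasure_map (μ := P) hX.aemeasurable
  exact ⟨⟨B, hB, G.subset_saturation A, hB_null, hPB⟩,
    .mk ((prob_compl_eq_zero_iff hB).2 hPB) hB_null (by simp)⟩

/-- If the law `P_X` has no atoms and charges some Lebesgue-null Borel set `A`, then it is
singular with respect to Lebesgue measure: there is a Borel set `B ⊇ A` of Lebesgue measure
zero with `P_X(B) = 1`. -/
theorem continuous_charging_null_set_implies_singular
    {Ω : Type*} [MeasurableSpace Ω] (P : Measure Ω) [IsProbabilityMeasure P]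
    (T : Ω → Ω) (hT : Ergodic T P)
    (b r : Ω → ℝ) (hb : Measurable b) (hr : Measurable r)
    (hrpos : ∀ ω, 0 < r ω)
    (hbInt : Integrable b P)
    (hlogInt : Integrable (fun ω => Real.log (r ω)) P)
    (hlogNeg : ∫ ω, Real.log (r ω) ∂P < 0)
    (hScount : Set.Countable {p : ℝ × ℝ | ∃ ω, (b ω, r ω) = p})
    (hSpos : ∀ p ∈ {p : ℝ × ℝ | ∃ ω, (b ω, r ω) = p}, 0 < P {ω | (b ω, r ω) = p})
    (X : Ω → ℝ) (hX : Measurable X)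
    (hXsum : ∀ᵐ ω ∂P,
      HasSum (fun n : ℕ => (∏ k ∈ Finset.range n, r (T^[k] ω)) * b (T^[n] ω)) (X ω))
    (hcont : ∀ a : ℝ, P.map X {a} = 0)
    (A : Set ℝ) (hA : MeasurableSet A) (hAnull : volume A = 0) (hApos : 0 < P.map X A) :
    (∃ B : Set ℝ, MeasurableSet B ∧ A ⊆ B ∧ volume B = 0 ∧ P.map X B = 1)
    ∧ P.map X ⟂ₘ volume :=
  continuous_charging_null_set_implies_singular_general P T hT b r hrpos hScount X hX hXsum A hA
    hAnull hApos
end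

section
/- For c∈ℝ, one has P_X=δ_c (the Dirac mass at c) if and only if every φ∈S fixes c, i.e. if and only if b(ω)+r(ω)c=c for P-almost every ω. -/
/-!
If `X = c` almost surely, the identity `X = b + r · X ∘ T` (shift the series by one step) and
the invariance of `P` under `T` give `b + r c = c` almost surely. Conversely, if every `φ_ω`
fixes `c`, then `c - X(ω) = lim_N c · r_N(ω)` by telescoping. Since `∫ log r < 0`, some set
`{log r ≤ -ε}` has positive measure, and by ergodicity almost every orbit visits it infinitely
often; then `r_N(ω)` cannot converge to a nonzero limit, so `X = c` almost surely.
-/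

open MeasureTheory Filter Topology

open Finset in
theorem tendsto_one_of_tendsto_prod_range {G₀ : Type*} [CommGroupWithZero G₀]
    [TopologicalSpace G₀] [T1Space G₀] [ContinuousInv₀ G₀] [ContinuousMul G₀] {f : ℕ → G₀} {L : G₀}
    (h : Tendsto (fun N ↦ ∏ k ∈ range N, f k) atTop (𝓝 L)) (hL : L ≠ 0) :
    Tendsto f atTop (𝓝 1) := by
  have hratio := ((tendsto_add_atTop_iff_nat 1).2 h).div h hL
  rw [div_self hL] at hratio
  refine hratio.congr' ?_
  filter_upwards [h.eventually_ne hL] with N hN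
  simp only [Pi.div_apply, prod_range_succ, mul_div_cancel_left₀ _ hN]

theorem exists_measure_setOf_le_neg_ne_zero_of_integral_neg {α : Type*} [MeasurableSpace α]
    {μ : Measure α} {f : α → ℝ} (h : ∫ x, f x ∂μ < 0) :
    ∃ ε > 0, μ {x | f x ≤ -ε} ≠ 0 := by
  by_contra! hnull
  have hnonneg : ∀ᵐ x ∂μ, 0 ≤ f x := by
    refine measure_mono_null (fun x (hx : ¬ 0 ≤ f x) ↦ ?_) (measure_iUnion_null fun n : ℕ ↦
      hnull (1 / (n + 1)) Nat.one_div_pos_of_nat)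
    obtain ⟨n, hn⟩ := exists_nat_one_div_lt (neg_pos.2 (not_le.1 hx))
    exact Set.mem_iUnion.2 ⟨n, show f x ≤ _ by linarith⟩
  exact (integral_nonneg_of_ae hnonneg).not_gt h

theorem ae_eq_const_of_map_eq_dirac {α β : Type*} [MeasurableSpace α] [MeasurableSpace β]
    [MeasurableSingletonClass β] {μ : Measure α} {f : α → β} {c : β}
    (h : μ.map f = Measure.dirac c) : ∀ᵐ x ∂μ, f x = c := by
  have hf : AEMeasurable f μ := by
    by_contra hf
    simpa [Measure.map_of_not_aemeasurable hf] using congrArg (· Set.univ) h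
  exact ae_of_ae_map hf (h ▸ ae_eq_dirac id)

/-- The set of points visiting `s` infinitely often is invariant and, by Poincaré recurrence,
contains almost all of `s`; ergodicity makes it conull. -/
theorem Ergodic.ae_frequently_mem {α : Type*} [MeasurableSpace α] {μ : Measure α}
    [IsFiniteMeasure μ] {T : α → α} (hT : Ergodic T μ) {s : Set α} (hs : MeasurableSet s)
    (h0 : μ s ≠ 0) : ∀ᵐ x ∂μ, ∃ᶠ n in atTop, T^[n] x ∈ s := by
  set E := limsup (fun n ↦ T^[n] ⁻¹' s) atTop
  have hE : ∀ x, x ∈ E ↔ ∃ᶠ n in atTop, T^[n] x ∈ s := fun x ↦ mem_limsup_iff_frequently_mem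
  have hEinv : T ⁻¹' E = E := by
    ext x
    simp only [Set.mem_preimage, hE, ← Function.iterate_succ_apply]
    exact (frequently_map (m := (· + 1)) (P := fun n ↦ T^[n] x ∈ s)).symm.trans
      (by rw [map_add_atTop_eq_nat])
  have hEmeas : MeasurableSet E :=
    MeasurableSet.measurableSet_limsup fun n ↦ hT.measurable.iterate n hs
  rcases hT.ae_mem_or_ae_notMem hEmeas hEinv with hmem | hnotMem
  · exact hmem.mono fun x hx ↦ (hE x).1 hx
  · refine absurd (measure_eq_zero_iff_ae_notMem.2 ?_) h0
    filter_upwards [hT.conservative.ae_mem_imp_frequently_image_mem hs.nullMeasurableSet,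
      hnotMem] with x hfreq hx hxs
    exact hx ((hE x).2 (hfreq hxs))

section AffineSeries

open Finset

variable {a b : ℕ → ℝ} {c : ℝ}

theorem sum_range_prod_mul_eq_of_fixed (hfix : ∀ n, b n + a n * c = c) (N : ℕ) :
    ∑ n ∈ range N, (∏ k ∈ range n, a k) * b n = c - c * ∏ k ∈ range N, a k := by
  induction N with
  | zero => simp
  | succ N ih =>
    rw [sum_range_succ, prod_range_succ, ih, eq_sub_of_add_eq (hfix N)]
    ring

/-- If `x ≠ c`, the partial products tend to a nonzero limit, forcing `a n → 1`. -/
theorem eq_of_hasSum_of_fixed {x ε : ℝ} (hε : 0 < ε)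
    (hsum : HasSum (fun n ↦ (∏ k ∈ range n, a k) * b n) x) (hfix : ∀ n, b n + a n * c = c)
    (hfreq : ∃ᶠ n in atTop, Real.log (a n) ≤ -ε) : x = c := by
  by_contra hxc
  have hc : c ≠ 0 := by
    rintro rfl
    refine hxc (tendsto_nhds_unique hsum.tendsto_sum_nat ?_)
    simp [sum_range_prod_mul_eq_of_fixed hfix]
  have hprod : Tendsto (fun N ↦ ∏ k ∈ range N, a k) atTop (𝓝 ((c - x) / c)) := by
    simpa only [sum_range_prod_mul_eq_of_fixed hfix, sub_sub_cancel, mul_div_cancel_left₀ _ hc]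
      using (hsum.tendsto_sum_nat.const_sub c).div_const c
  have hlog : Tendsto (fun n ↦ Real.log (a n)) atTop (𝓝 0) := by
    simpa [Function.comp_def] using ((Real.continuousAt_log one_ne_zero).tendsto).comp
      (tendsto_one_of_tendsto_prod_range hprod (div_ne_zero (sub_ne_zero.2 (Ne.symm hxc)) hc))
  obtain ⟨n, hle, hgt⟩ :=
    (hfreq.and_eventually (hlog.eventually (Ioi_mem_nhds (neg_lt_zero.2 hε)))).exists
  exact (not_le.2 hgt) hle

end AffineSeries

theorem eq_add_mul_of_hasSum_iterate {Ω : Type*} {T : Ω → Ω} {b r : Ω → ℝ} {ω : Ω} {x y : ℝ}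
    (hx : HasSum (fun n ↦ (∏ k ∈ Finset.range n, r (T^[k] ω)) * b (T^[n] ω)) x)
    (hy : HasSum (fun n ↦ (∏ k ∈ Finset.range n, r (T^[k] (T ω))) * b (T^[n] (T ω))) y) :
    x = b ω + r ω * y := by
  have hshift : HasSum (fun n ↦ (∏ k ∈ Finset.range (n + 1), r (T^[k] ω)) * b (T^[n + 1] ω))
      (r ω * y) := by
    have hterm : ∀ n, r ω * ((∏ k ∈ Finset.range n, r (T^[k] (T ω))) * b (T^[n] (T ω))) =
        (∏ k ∈ Finset.range (n + 1), r (T^[k] ω)) * b (T^[n + 1] ω) := fun n ↦ by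
      simp only [Finset.prod_range_succ', Function.iterate_succ_apply, Function.iterate_zero_apply]
      ring
    simpa only [hterm] using hy.mul_left (r ω)
  have hsum := (hasSum_nat_add_iff
    (f := fun n ↦ (∏ k ∈ Finset.range n, r (T^[k] ω)) * b (T^[n] ω)) 1).1 hshift
  rw [hx.unique hsum]
  simp [add_comm]

theorem law_eq_dirac_iff_fixed_general
    {Ω : Type*} [MeasurableSpace Ω] (P : Measure Ω) [IsProbabilityMeasure P]
    (T : Ω → Ω) (hT : Ergodic T P)
    (b r : Ω → ℝ) (hr : Measurable r)
    (hlogNeg : ∫ ω, Real.log (r ω) ∂P < 0)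
    (X : Ω → ℝ)
    (hXsum : ∀ᵐ ω ∂P,
      HasSum (fun n : ℕ => (∏ k ∈ Finset.range n, r (T^[k] ω)) * b (T^[n] ω)) (X ω))
    (c : ℝ) :
    P.map X = Measure.dirac c ↔ (∀ᵐ ω ∂P, b ω + r ω * c = c) := by
  have hTae := hT.quasiMeasurePreserving
  constructor
  · intro hmap
    have hXc := ae_eq_const_of_map_eq_dirac hmap
    filter_upwards [hXsum, hTae.ae hXsum, hXc, hTae.ae hXc] with ω hsum hsumT hXω hXTω
    simpa [hXω, hXTω] using (eq_add_mul_of_hasSum_iterate hsum hsumT).symm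
  · intro hfix
    obtain ⟨ε, hε, hs⟩ := exists_measure_setOf_le_neg_ne_zero_of_integral_neg hlogNeg
    have hfreq := hT.ae_frequently_mem (measurableSet_le hr.log measurable_const) hs
    have hfixIter : ∀ᵐ ω ∂P, ∀ n, b (T^[n] ω) + r (T^[n] ω) * c = c :=
      ae_all_iff.2 fun n ↦ (hT.iterate n).quasiMeasurePreserving.ae hfix
    have hXc : ∀ᵐ ω ∂P, X ω = c := by
      filter_upwards [hXsum, hfixIter, hfreq] with ω hsum hfixω hfreqω
      exact eq_of_hasSum_of_fixed hε hsum hfixω hfreqω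
    rw [Measure.map_congr hXc, Measure.map_const, measure_univ, one_smul]

/-- The law `P_X` is the Dirac mass at `c` if and only if every affine map `φ_ω` fixes `c`,
i.e. if and only if `b(ω) + r(ω)·c = c` for `P`-almost every `ω`. -/
theorem law_eq_dirac_iff_fixed
    {Ω : Type*} [MeasurableSpace Ω] (P : Measure Ω) [IsProbabilityMeasure P]
    (T : Ω → Ω) (hT : Ergodic T P)
    (b r : Ω → ℝ) (hb : Measurable b) (hr : Measurable r)
    (hrpos : ∀ ω, 0 < r ω)
    (hbInt : Integrable b P)
    (hlogInt : Integrable (fun ω => Real.log (r ω)) P)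
    (hlogNeg : ∫ ω, Real.log (r ω) ∂P < 0)
    (hScount : Set.Countable {p : ℝ × ℝ | ∃ ω, (b ω, r ω) = p})
    (hSpos : ∀ p ∈ {p : ℝ × ℝ | ∃ ω, (b ω, r ω) = p}, 0 < P {ω | (b ω, r ω) = p})
    (X : Ω → ℝ) (hX : Measurable X)
    (hXsum : ∀ᵐ ω ∂P,
      HasSum (fun n : ℕ => (∏ k ∈ Finset.range n, r (T^[k] ω)) * b (T^[n] ω)) (X ω))
    (c : ℝ) :
    P.map X = Measure.dirac c ↔ (∀ᵐ ω ∂P, b ω + r ω * c = c) :=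
  law_eq_dirac_iff_fixed_general P T hT b r hr hlogNeg X hXsum c
end
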